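/- arXiv:2310.13445 — 3 statements merged into one kernel-verified Lean document; each statement's English description precedes it below -/
import Mathlib

section
/- Let $p \ge 1$ be an integer, $\nu \ge 0$ a real number, $1/2 < s \le 1$, and $c > 0$. Then the series $\sum_{k=0}^{\infty} \dfrac{c^{k}}{k!}\, \dfrac{\Gamma\!\big(\tfrac{2\nu+p+2k}{2s}\big)}{\Gamma\!\big(\tfrac{p+2k}{2}\big)}$ converges (i.e., the sequence of its terms is summable). -/
open Real Filter

/-- Gautschi-type inequality from log-convexity of Gamma. -/
private lemma kz_gautschi {x a : ℝ} (hx : 0 < x) (ha0 : 0 ≤ a) (ha1 : a ≤ 1) :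
    Real.Gamma (x + a) ≤ Real.Gamma x * x ^ a := by
  have hx1 : (0:ℝ) < x + 1 := by linarith
  have hΓx : 0 < Real.Gamma x := Real.Gamma_pos_of_pos hx
  have hΓx1 : 0 < Real.Gamma (x + 1) := Real.Gamma_pos_of_pos hx1
  have hxa : 0 < x + a := by linarith
  have key := Real.convexOn_log_Gamma.2 (Set.mem_Ioi.mpr hx) (Set.mem_Ioi.mpr hx1)
      (by linarith : (0:ℝ) ≤ 1 - a) ha0 (by ring)
  have harg : (1 - a) • x + a • (x + 1) = x + a := by
    simp only [smul_eq_mul]; ring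
  rw [harg] at key
  simp only [Function.comp] at key
  have h2 : Real.Gamma (x + a)
      ≤ Real.exp ((1-a) * Real.log (Real.Gamma x) + a * Real.log (Real.Gamma (x+1))) := by
    calc Real.Gamma (x+a) = Real.exp (Real.log (Real.Gamma (x+a))) :=
          (Real.exp_log (Real.Gamma_pos_of_pos hxa)).symm
      _ ≤ _ := Real.exp_le_exp.mpr key
  calc Real.Gamma (x + a) ≤ _ := h2
    _ = Real.Gamma x ^ (1-a) * Real.Gamma (x+1) ^ a := by
        rw [Real.exp_add, Real.rpow_def_of_pos hΓx, Real.rpow_def_of_pos hΓx1]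
        ring_nf
    _ = Real.Gamma x * x ^ a := by
        rw [Real.Gamma_add_one hx.ne', Real.mul_rpow hx.le hΓx.le,
          show Real.Gamma x ^ (1-a) * (x ^ a * Real.Gamma x ^ a)
            = (Real.Gamma x ^ (1-a) * Real.Gamma x ^ a) * x ^ a from by ring,
          ← Real.rpow_add hΓx]
        norm_num

private noncomputable def kzx (p : ℕ) (ν s : ℝ) (k : ℕ) : ℝ := (2 * ν + p + 2 * k) / (2 * s)
private noncomputable def kzy (p : ℕ) (k : ℕ) : ℝ := ((p : ℝ) + 2 * k) / 2

/-- For `p ≥ 1`, `ν ≥ 0`, `1/2 < s ≤ 1` and `c > 0`, the series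
`∑ₖ cᵏ/k! · Γ((2ν+p+2k)/(2s)) / Γ((p+2k)/2)` converges. -/
theorem kotz_series_summable_half_lt_s
    (p : ℕ) (hp : 1 ≤ p) (ν s c : ℝ) (hν : 0 ≤ ν)
    (hs₁ : 1 / 2 < s) (hs₂ : s ≤ 1) (hc : 0 < c) :
    Summable (fun k : ℕ =>
      c ^ k / (k.factorial : ℝ) *
        (Real.Gamma ((2 * ν + p + 2 * k) / (2 * s)) / Real.Gamma (((p : ℝ) + 2 * k) / 2))) := by
  have hs0 : 0 < s := by linarith
  obtain ⟨a, ha_def⟩ : ∃ a : ℝ, a = 1 / s - 1 := ⟨_, rfl⟩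
  have ha0 : 0 ≤ a := by
    have h : 1 ≤ 1 / s := by rw [le_div_iff₀ hs0]; linarith
    rw [ha_def]; linarith
  have ha1 : a < 1 := by
    have h : 1 / s < 2 := by rw [div_lt_iff₀ hs0]; linarith
    rw [ha_def]; linarith
  have hp1 : (1:ℝ) ≤ p := by exact_mod_cast hp
  have hxpos : ∀ k, 0 < kzx p ν s k := by
    intro k
    have hk : (0:ℝ) ≤ k := Nat.cast_nonneg k
    unfold kzx
    apply div_pos (by linarith) (by linarith)
  have hypos : ∀ k, 0 < kzy p k := by
    intro k
    have hk : (0:ℝ) ≤ k := Nat.cast_nonneg k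
    unfold kzy
    apply div_pos (by linarith) (by norm_num)
  have hΓx : ∀ k, 0 < Real.Gamma (kzx p ν s k) := fun k => Real.Gamma_pos_of_pos (hxpos k)
  have hΓy : ∀ k, 0 < Real.Gamma (kzy p k) := fun k => Real.Gamma_pos_of_pos (hypos k)
  set f : ℕ → ℝ := fun k =>
    c ^ k / (k.factorial : ℝ) * (Real.Gamma (kzx p ν s k) / Real.Gamma (kzy p k)) with hf_def
  show Summable f
  have hfpos : ∀ k, 0 < f k := fun k => by
    rw [hf_def]
    have hfac : (0:ℝ) < (k.factorial : ℝ) := by exact_mod_cast k.factorial_pos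
    exact mul_pos (div_pos (pow_pos hc k) hfac) (div_pos (hΓx k) (hΓy k))
  obtain ⟨M, hM_def⟩ : ∃ M : ℝ, M = (2 * ν + p) / (2 * s) + 1 / s := ⟨_, rfl⟩
  have hM : 0 < M := by
    rw [hM_def]
    have : 0 < (2 * ν + p) / (2 * s) := div_pos (by linarith) (by linarith)
    have : 0 < 1 / s := by positivity
    linarith
  have hxle : ∀ k, kzx p ν s k ≤ M * ((k:ℝ) + 1) := by
    intro k
    have hk : (0:ℝ) ≤ k := Nat.cast_nonneg k
    have hM1 : M * ((k:ℝ) + 1) = ((2 * ν + p + 2) * ((k:ℝ) + 1)) / (2 * s) := by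
      rw [hM_def]; field_simp
    rw [hM1]
    unfold kzx
    gcongr
    nlinarith [mul_nonneg (by linarith : (0:ℝ) ≤ 2 * ν + (p:ℝ)) hk]
  have hyk : ∀ k : ℕ, ((k:ℝ) + 1) / 2 ≤ kzy p k := by
    intro k
    have hk : (0:ℝ) ≤ k := Nat.cast_nonneg k
    unfold kzy
    linarith
  obtain ⟨g, hg_def⟩ : ∃ g : ℕ → ℝ, g = fun k =>
    c * kzx p ν s k * (kzx p ν s k + 1) ^ a / (((k:ℝ) + 1) * kzy p k) := ⟨_, rfl⟩
  obtain ⟨D, hD_def⟩ : ∃ D : ℝ, D = 2 * c * M * (M + 1) ^ a := ⟨_, rfl⟩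
  have hgle : ∀ k, g k ≤ D * ((k:ℝ) + 1) ^ (a - 1) := by
    intro k
    have hk1 : (0:ℝ) < (k:ℝ) + 1 := by positivity
    have hx := hxpos k
    have hy := hypos k
    have h2 : (kzx p ν s k + 1) ^ a ≤ (M + 1) ^ a * ((k:ℝ) + 1) ^ a := by
      rw [← Real.mul_rpow (by linarith) hk1.le]
      apply Real.rpow_le_rpow (by linarith) ?_ ha0
      nlinarith [hxle k]
    have h3 : ((k:ℝ) + 1) * (((k:ℝ) + 1) / 2) ≤ ((k:ℝ) + 1) * kzy p k :=
      mul_le_mul_of_nonneg_left (hyk k) hk1.le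
    have hrp : (0:ℝ) ≤ ((k:ℝ) + 1) ^ a := Real.rpow_nonneg hk1.le a
    calc g k ≤ (c * (M * ((k:ℝ) + 1)) * ((M + 1) ^ a * ((k:ℝ) + 1) ^ a))
            / (((k:ℝ) + 1) * (((k:ℝ) + 1) / 2)) := by
          simp only [hg_def]
          apply div_le_div₀ (by positivity) ?_ (by positivity) h3
          apply mul_le_mul ?_ h2 (by positivity) (by positivity)
          exact mul_le_mul_of_nonneg_left (hxle k) hc.le
      _ = D * ((k:ℝ) + 1) ^ (a - 1) := by
          rw [Real.rpow_sub hk1, Real.rpow_one, hD_def]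
          field_simp
  have hgnn : ∀ k, 0 ≤ g k := by
    intro k
    have hx := hxpos k
    have hy := hypos k
    have hk1 : (0:ℝ) < (k:ℝ) + 1 := by positivity
    simp only [hg_def]
    positivity
  have htend : Tendsto g atTop (nhds 0) := by
    apply squeeze_zero hgnn hgle
    have h1 : Tendsto (fun t : ℝ => t ^ (-(1 - a))) atTop (nhds 0) :=
      tendsto_rpow_neg_atTop (by linarith)
    have h2 : Tendsto (fun k : ℕ => ((k:ℝ) + 1)) atTop atTop :=
      tendsto_atTop_add_const_right atTop 1 tendsto_natCast_atTop_atTop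
    have h3 := h1.comp h2
    simp only [Function.comp_def] at h3
    have h4 : (fun k : ℕ => D * ((k:ℝ) + 1) ^ (a - 1))
        = fun k : ℕ => D * ((k:ℝ) + 1) ^ (-(1 - a)) := by
      funext k; norm_num
    rw [h4]
    simpa using h3.const_mul D
  have hev : ∀ᶠ k in atTop, g k ≤ 1 / 2 :=
    (htend.eventually_lt_const (by norm_num : (0:ℝ) < 1/2)).mono fun k hk => hk.le
  apply summable_of_ratio_norm_eventually_le (by norm_num : (1:ℝ)/2 < 1)
  filter_upwards [hev] with k hk
  rw [Real.norm_eq_abs, Real.norm_eq_abs, abs_of_pos (hfpos _), abs_of_pos (hfpos _)]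
  have hx := hxpos k
  have hy := hypos k
  have hGx := hΓx k
  have hGy := hΓy k
  have hk1 : (0:ℝ) < (k:ℝ) + 1 := by positivity
  have hfac : (0:ℝ) < (k.factorial : ℝ) := by exact_mod_cast k.factorial_pos
  have ex : kzx p ν s (k+1) = (kzx p ν s k + 1) + a := by
    unfold kzx; rw [ha_def]; push_cast; field_simp; ring
  have ey : kzy p (k+1) = kzy p k + 1 := by
    unfold kzy; push_cast; ring
  have hgamy : Real.Gamma (kzy p (k+1)) = kzy p k * Real.Gamma (kzy p k) := by
    rw [ey, Real.Gamma_add_one hy.ne']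
  have hgamx : Real.Gamma (kzx p ν s (k+1))
      ≤ kzx p ν s k * Real.Gamma (kzx p ν s k) * (kzx p ν s k + 1) ^ a := by
    rw [ex]
    calc Real.Gamma ((kzx p ν s k + 1) + a)
        ≤ Real.Gamma (kzx p ν s k + 1) * (kzx p ν s k + 1) ^ a :=
          kz_gautschi (by linarith) ha0 ha1.le
      _ = kzx p ν s k * Real.Gamma (kzx p ν s k) * (kzx p ν s k + 1) ^ a := by
          rw [Real.Gamma_add_one hx.ne']
  have hfact : (((k+1).factorial : ℕ) : ℝ) = ((k:ℝ) + 1) * (k.factorial : ℝ) := by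
    rw [Nat.factorial_succ]; push_cast; ring
  have step1 : f (k+1) ≤ g k * f k := by
    rw [hf_def]
    simp only
    rw [hfact, hgamy, pow_succ]
    calc c ^ k * c / (((k:ℝ) + 1) * (k.factorial : ℝ)) *
          (Real.Gamma (kzx p ν s (k+1)) / (kzy p k * Real.Gamma (kzy p k)))
        ≤ c ^ k * c / (((k:ℝ) + 1) * (k.factorial : ℝ)) *
          ((kzx p ν s k * Real.Gamma (kzx p ν s k) * (kzx p ν s k + 1) ^ a)
            / (kzy p k * Real.Gamma (kzy p k))) := by
          gcongr
      _ = g k * (c ^ k / (k.factorial : ℝ) *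
            (Real.Gamma (kzx p ν s k) / Real.Gamma (kzy p k))) := by
          simp only [hg_def]
          field_simp
  calc f (k+1) ≤ g k * f k := step1
    _ ≤ 1/2 * f k := mul_le_mul_of_nonneg_right hk (hfpos k).le
end

section
/- Let $p \ge 1$ be an integer, $\nu \ge 0$ a real number, $0 < s < 1/2$, and $c > 0$. Then the series $\sum_{k=0}^{\infty} \dfrac{1}{k!}\, 2^{2sk}\, \Gamma\!\big(sk+\nu+\tfrac{p}{2}\big)\, \Gamma(sk+\nu+1)\, \big|\sin\!\big(\pi(sk+\nu)\big)\big|\, c^{-sk}$ converges (i.e., the sequence of its terms is summable). -/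
open Real Filter

/-- Log-convexity consequence: `Γ(x + s) ≤ Γ(x) * x ^ s` for `0 < s < 1`, `x > 0`. -/
lemma Gamma_add_le_aux {x s : ℝ} (hx : 0 < x) (hs : 0 < s) (hs1 : s < 1) :
    Real.Gamma (x + s) ≤ Real.Gamma x * x ^ s := by
  have h := Real.Gamma_mul_add_mul_le_rpow_Gamma_mul_rpow_Gamma hx
    (by linarith : (0:ℝ) < x + 1) (by linarith : (0:ℝ) < 1 - s) hs (by ring)
  have he : (1 - s) * x + s * (x + 1) = x + s := by ring
  rw [he] at h
  have hΓ : 0 < Real.Gamma x := Real.Gamma_pos_of_pos hx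
  calc Real.Gamma (x + s) ≤ Real.Gamma x ^ (1 - s) * Real.Gamma (x + 1) ^ s := h
    _ = Real.Gamma x ^ (1 - s) * (x * Real.Gamma x) ^ s := by
        rw [Real.Gamma_add_one (ne_of_gt hx)]
    _ = Real.Gamma x ^ (1 - s) * (x ^ s * Real.Gamma x ^ s) := by
        rw [Real.mul_rpow hx.le hΓ.le]
    _ = (Real.Gamma x ^ (1 - s) * Real.Gamma x ^ s) * x ^ s := by ring
    _ = Real.Gamma x * x ^ s := by
        rw [← Real.rpow_add hΓ]; norm_num

/-- For `p ≥ 1`, `ν ≥ 0`, `0 < s < 1/2` and `c > 0`, the series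
`∑ₖ (1/k!) 2^(2sk) Γ(sk+ν+p/2) Γ(sk+ν+1) |sin(π(sk+ν))| c^(-sk)` converges. -/
theorem kotz_series_summable_s_lt_half
    (p : ℕ) (hp : 1 ≤ p) (ν s c : ℝ) (hν : 0 ≤ ν)
    (hs₁ : 0 < s) (hs₂ : s < 1 / 2) (hc : 0 < c) :
    Summable (fun k : ℕ =>
      (1 / (k.factorial : ℝ)) * (2 : ℝ) ^ (2 * s * k) *
        Real.Gamma (s * k + ν + p / 2) * Real.Gamma (s * k + ν + 1) *
        |Real.sin (π * (s * k + ν))| * c ^ (-(s * k))) := by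
  set A : ℝ := ν + p / 2 with hA
  set Bv : ℝ := ν + 1 with hB
  have hA0 : 0 < A := by
    have : (1:ℝ) ≤ (p:ℝ) := by exact_mod_cast hp
    have : (0:ℝ) < p / 2 := by linarith
    rw [hA]; linarith
  have hB0 : 0 < Bv := by rw [hB]; linarith
  set B : ℝ := 2 ^ (2 * s) * c ^ (-s) with hBdef
  have hBpos : 0 < B := by positivity
  set g : ℕ → ℝ := fun k =>
    B ^ k * Real.Gamma (s * k + A) * Real.Gamma (s * k + Bv) / k.factorial with hg
  have hs1 : s < 1 := by linarith
  have hgpos : ∀ k, 0 < g k := by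
    intro k
    have h1 : 0 < s * k + A := by positivity
    have h2 : 0 < s * k + Bv := by positivity
    have := Real.Gamma_pos_of_pos h1
    have := Real.Gamma_pos_of_pos h2
    have : (0:ℝ) < k.factorial := by exact_mod_cast k.factorial_pos
    positivity
  -- Summability of g by the ratio test
  have hgsum : Summable g := by
    apply summable_of_ratio_norm_eventually_le (r := 1/2) (by norm_num)
    set D : ℝ := (s + A) ^ s * (s + Bv) ^ s with hD
    have hDpos : 0 < D := by positivity
    have htend : Tendsto (fun k : ℕ => ((k : ℝ) + 1) ^ (1 - 2 * s)) atTop atTop := by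
      apply (tendsto_rpow_atTop (by linarith)).comp
      exact tendsto_atTop_add_const_right _ _ tendsto_natCast_atTop_atTop
    filter_upwards [htend.eventually_ge_atTop (2 * B * D)] with k hk
    have hk1 : (0:ℝ) < (k:ℝ) + 1 := by positivity
    rw [Real.norm_of_nonneg (hgpos (k+1)).le, Real.norm_of_nonneg (hgpos k).le]
    have h1 : 0 < s * k + A := by positivity
    have h2 : 0 < s * k + Bv := by positivity
    have hΓ1 := Real.Gamma_pos_of_pos h1
    have hΓ2 := Real.Gamma_pos_of_pos h2
    -- Gamma bounds
    have e1 : s * ((k:ℝ)+1) + A = (s * k + A) + s := by push_cast; ring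
    have e2 : s * ((k:ℝ)+1) + Bv = (s * k + Bv) + s := by push_cast; ring
    have g1 : Real.Gamma (s * ((k:ℝ)+1) + A) ≤ Real.Gamma (s * k + A) * (s * k + A) ^ s := by
      rw [e1]; exact Gamma_add_le_aux h1 hs₁ hs1
    have g2 : Real.Gamma (s * ((k:ℝ)+1) + Bv) ≤ Real.Gamma (s * k + Bv) * (s * k + Bv) ^ s := by
      rw [e2]; exact Gamma_add_le_aux h2 hs₁ hs1
    -- polynomial bounds
    have p1 : (s * k + A) ^ s ≤ (s + A) ^ s * ((k:ℝ)+1) ^ s := by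
      rw [← Real.mul_rpow (by positivity) (by positivity)]
      apply Real.rpow_le_rpow h1.le _ hs₁.le
      nlinarith [hs₁.le, hA0.le, Nat.cast_nonneg (α := ℝ) k]
    have p2 : (s * k + Bv) ^ s ≤ (s + Bv) ^ s * ((k:ℝ)+1) ^ s := by
      rw [← Real.mul_rpow (by positivity) (by positivity)]
      apply Real.rpow_le_rpow h2.le _ hs₁.le
      nlinarith [hs₁.le, hB0.le, Nat.cast_nonneg (α := ℝ) k]
    -- the key numeric bound: B * D * (k+1)^(2s) ≤ (1/2) * (k+1)
    have key : B * (D * (((k:ℝ)+1) ^ s * ((k:ℝ)+1) ^ s)) ≤ (1/2) * ((k:ℝ)+1) := by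
      have hsplit : ((k:ℝ)+1) ^ (2*s) * ((k:ℝ)+1) ^ (1 - 2*s) = (k:ℝ)+1 := by
        rw [← Real.rpow_add hk1]; norm_num
      have hss : ((k:ℝ)+1) ^ s * ((k:ℝ)+1) ^ s = ((k:ℝ)+1) ^ (2*s) := by
        rw [← Real.rpow_add hk1]; ring_nf
      rw [hss]
      have h2s : (0:ℝ) < ((k:ℝ)+1) ^ (2*s) := by positivity
      calc B * (D * ((k:ℝ)+1) ^ (2*s)) = (2 * B * D) * ((k:ℝ)+1) ^ (2*s) / 2 := by ring
        _ ≤ ((k:ℝ)+1) ^ (1 - 2*s) * ((k:ℝ)+1) ^ (2*s) / 2 := by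
            apply div_le_div_of_nonneg_right _ (by norm_num)
            exact mul_le_mul_of_nonneg_right hk h2s.le
        _ = (1/2) * ((k:ℝ)+1) := by rw [mul_comm (((k:ℝ)+1) ^ (1 - 2*s))]; rw [hsplit]; ring
    -- assemble
    have hfact : ((k+1).factorial : ℝ) = ((k:ℝ)+1) * k.factorial := by
      rw [Nat.factorial_succ]; push_cast; ring
    have hfk : (0:ℝ) < k.factorial := by exact_mod_cast k.factorial_pos
    simp only [hg]
    rw [div_le_iff₀ (by positivity), hfact]
    have step1 : B ^ (k+1) * Real.Gamma (s * ↑(k+1) + A) * Real.Gamma (s * ↑(k+1) + Bv)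
        ≤ B ^ (k+1) * (Real.Gamma (s * k + A) * (s * k + A) ^ s) *
          (Real.Gamma (s * k + Bv) * (s * k + Bv) ^ s) := by
      push_cast
      apply mul_le_mul _ g2 (Real.Gamma_pos_of_pos (by positivity)).le (by positivity)
      exact mul_le_mul_of_nonneg_left g1 (by positivity)
    calc B ^ (k+1) * Real.Gamma (s * ↑(k+1) + A) * Real.Gamma (s * ↑(k+1) + Bv)
        ≤ B ^ (k+1) * (Real.Gamma (s * k + A) * (s * k + A) ^ s) *
          (Real.Gamma (s * k + Bv) * (s * k + Bv) ^ s) := step1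
      _ = (B ^ k * Real.Gamma (s * k + A) * Real.Gamma (s * k + Bv)) *
          (B * ((s * k + A) ^ s * (s * k + Bv) ^ s)) := by ring
      _ ≤ (B ^ k * Real.Gamma (s * k + A) * Real.Gamma (s * k + Bv)) *
          (B * ((s + A) ^ s * ((k:ℝ)+1) ^ s * ((s + Bv) ^ s * ((k:ℝ)+1) ^ s))) := by
          apply mul_le_mul_of_nonneg_left _ (by positivity)
          apply mul_le_mul_of_nonneg_left _ hBpos.le
          exact mul_le_mul p1 p2 (by positivity) (by positivity)
      _ = (B ^ k * Real.Gamma (s * k + A) * Real.Gamma (s * k + Bv)) *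
          (B * (D * (((k:ℝ)+1) ^ s * ((k:ℝ)+1) ^ s))) := by rw [hD]; ring
      _ ≤ (B ^ k * Real.Gamma (s * k + A) * Real.Gamma (s * k + Bv)) *
          ((1/2) * ((k:ℝ)+1)) := by
          apply mul_le_mul_of_nonneg_left key (by positivity)
      _ = 1/2 * (B ^ k * Real.Gamma (s * ↑k + A) * Real.Gamma (s * ↑k + Bv) / ↑k.factorial) *
          (((k:ℝ) + 1) * ↑k.factorial) := by field_simp
  -- Compare the original series with g
  apply Summable.of_nonneg_of_le _ _ hgsum
  · intro k
    have h1 : 0 < s * k + ν + (p:ℝ) / 2 := by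
      have : (1:ℝ) ≤ (p:ℝ) := by exact_mod_cast hp
      positivity
    have h2 : 0 < s * k + ν + 1 := by positivity
    have := Real.Gamma_pos_of_pos h1
    have := Real.Gamma_pos_of_pos h2
    have : (0:ℝ) < k.factorial := by exact_mod_cast k.factorial_pos
    positivity
  · intro k
    have h1 : 0 < s * k + ν + (p:ℝ) / 2 := by
      have : (1:ℝ) ≤ (p:ℝ) := by exact_mod_cast hp
      positivity
    have h2 : 0 < s * k + ν + 1 := by positivity
    have hΓ1 := Real.Gamma_pos_of_pos h1
    have hΓ2 := Real.Gamma_pos_of_pos h2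
    have hfk : (0:ℝ) < k.factorial := by exact_mod_cast k.factorial_pos
    have hpow2 : (2:ℝ) ^ (2 * s * k) = (2 ^ (2*s)) ^ k := by
      rw [← Real.rpow_natCast (2 ^ (2*s)) k, ← Real.rpow_mul (by norm_num)]
    have hpowc : c ^ (-(s * k)) = (c ^ (-s)) ^ k := by
      rw [← Real.rpow_natCast (c ^ (-s)) k, ← Real.rpow_mul hc.le]
      ring_nf
    have hsin : |Real.sin (π * (s * k + ν))| ≤ 1 := abs_sin_le_one _
    have eA : s * k + ν + (p:ℝ)/2 = s * k + A := by rw [hA]; ring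
    have eB : s * k + ν + 1 = s * k + Bv := by rw [hB]; ring
    simp only [hg]
    rw [hpow2, hpowc, eA, eB, hBdef]
    have hΓ1' := Real.Gamma_pos_of_pos (show 0 < s * k + A by rw [← eA]; exact h1)
    have hΓ2' := Real.Gamma_pos_of_pos (show 0 < s * k + Bv by rw [← eB]; exact h2)
    calc 1 / ↑k.factorial * (2 ^ (2*s)) ^ k * Real.Gamma (s * ↑k + A) *
          Real.Gamma (s * ↑k + Bv) * |Real.sin (π * (s * ↑k + ν))| * (c ^ (-s)) ^ k
        ≤ 1 / ↑k.factorial * (2 ^ (2*s)) ^ k * Real.Gamma (s * ↑k + A) *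
          Real.Gamma (s * ↑k + Bv) * 1 * (c ^ (-s)) ^ k := by
          apply mul_le_mul_of_nonneg_right _ (by positivity)
          exact mul_le_mul_of_nonneg_left hsin (by positivity)
      _ = (2 ^ (2*s) * c ^ (-s)) ^ k * Real.Gamma (s * ↑k + A) *
          Real.Gamma (s * ↑k + Bv) / ↑k.factorial := by
          rw [mul_pow]; ring
end

section
/- Let $p \ge 1$ be an integer, $\nu \ge 0$ an integer, and $r > 0$. Then for every $x \in \mathbb{R}^p$, $I_{\nu,r}(x;1) = \dfrac{\pi^{p/2}\,\Gamma\!\big(\tfrac{2\nu+p}{2}\big)}{r^{(2\nu+p)/2}}\, e^{-\|x\|^2/(4r)}\, \sum_{k=0}^{\nu} \binom{\nu}{k} \dfrac{\big(-\tfrac{\|x\|^2}{4r}\big)^{k}}{\Gamma\!\big(\tfrac{p+2k}{2}\big)}$. -/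
open MeasureTheory Real Metric
open scoped RealInnerProductSpace

noncomputable def Gfun (p ν : ℕ) (c r : ℝ) : ℝ :=
  π ^ ((p : ℝ) / 2) * Real.Gamma (ν + p / 2) * Real.exp (-c / r) *
    ∑ k ∈ Finset.range (ν + 1),
      (ν.choose k : ℝ) * (-c) ^ k / Real.Gamma (k + p / 2) * r ^ (-(ν : ℝ) - p / 2 - k)


lemma integrable_gauss {p : ℕ} {a : ℝ} (ha : 0 < a) :
    Integrable (fun t : EuclideanSpace ℝ (Fin p) => Real.exp (-a * ‖t‖ ^ 2)) := by
  have h := (GaussianFourier.integrable_cexp_neg_mul_sq_norm_add (V := EuclideanSpace ℝ (Fin p))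
    (b := (a : ℂ)) (by simpa using ha) 0 0).norm
  convert h using 2 with t
  simp [Complex.norm_exp, ← Complex.ofReal_pow]

lemma integrable_aux {p : ℕ} (n : ℕ) {a : ℝ} (ha : 0 < a) :
    Integrable (fun t : EuclideanSpace ℝ (Fin p) => ‖t‖ ^ n * Real.exp (-a * ‖t‖ ^ 2)) := by
  have ha2 : 0 < a / 2 := by linarith
  set C : ℝ := 1 + n.factorial * (2 / a) ^ n with hC
  have hCnn : 0 ≤ C := by positivity
  refine ((integrable_gauss (p := p) ha2).const_mul C).mono'
    (Continuous.aestronglyMeasurable (by continuity)) ?_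
  filter_upwards with t
  have hs : (0:ℝ) ≤ ‖t‖ := norm_nonneg t
  have key : ‖t‖ ^ n * Real.exp (-(a/2) * ‖t‖ ^ 2) ≤ C := by
    rcases le_or_gt ‖t‖ 1 with h1 | h1
    · have : ‖t‖ ^ n ≤ 1 := pow_le_one₀ hs h1
      have he : Real.exp (-(a/2) * ‖t‖ ^ 2) ≤ 1 := by
        rw [Real.exp_le_one_iff]; nlinarith
      have hpos : (0:ℝ) ≤ (n.factorial : ℝ) * (2/a) ^ n := by positivity
      nlinarith [Real.exp_pos (-(a/2) * ‖t‖ ^ 2)]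
    · have h2 : ‖t‖ ^ n ≤ (‖t‖ ^ 2) ^ n := by
        rw [← pow_mul]
        exact pow_le_pow_right₀ h1.le (by omega)
      have h3 : ((a/2) * ‖t‖ ^ 2) ^ n / n.factorial ≤ Real.exp ((a/2) * ‖t‖ ^ 2) :=
        Real.pow_div_factorial_le_exp (x := (a/2) * ‖t‖^2) (by positivity) n
      have h4 : (‖t‖ ^ 2) ^ n ≤ n.factorial * (2/a) ^ n * Real.exp ((a/2) * ‖t‖ ^ 2) := by
        have hfac : (0:ℝ) < n.factorial := by exact_mod_cast n.factorial_pos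
        rw [div_le_iff₀ hfac] at h3
        calc (‖t‖ ^ 2) ^ n = ((a/2) * ‖t‖^2) ^ n * (2/a) ^ n := by
              rw [← mul_pow]; field_simp
          _ ≤ Real.exp ((a/2) * ‖t‖ ^ 2) * n.factorial * (2/a) ^ n := by
              apply mul_le_mul_of_nonneg_right h3 (by positivity)
          _ = n.factorial * (2/a) ^ n * Real.exp ((a/2) * ‖t‖ ^ 2) := by ring
      have he : 0 < Real.exp (-(a/2) * ‖t‖ ^ 2) := Real.exp_pos _
      calc ‖t‖ ^ n * Real.exp (-(a/2) * ‖t‖ ^ 2)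
          ≤ (‖t‖ ^ 2) ^ n * Real.exp (-(a/2) * ‖t‖ ^ 2) :=
            mul_le_mul_of_nonneg_right h2 he.le
        _ ≤ (n.factorial * (2/a) ^ n * Real.exp ((a/2) * ‖t‖ ^ 2)) *
              Real.exp (-(a/2) * ‖t‖ ^ 2) := mul_le_mul_of_nonneg_right h4 he.le
        _ = n.factorial * (2/a) ^ n := by
            rw [mul_assoc, ← Real.exp_add]; ring_nf; simp
        _ ≤ C := by simp [hC]
  have : ‖t‖ ^ n * Real.exp (-a * ‖t‖ ^ 2)
      = (‖t‖ ^ n * Real.exp (-(a/2) * ‖t‖ ^ 2)) * Real.exp (-(a/2) * ‖t‖ ^ 2) := by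
    rw [mul_assoc, ← Real.exp_add]; ring_nf
  rw [Real.norm_eq_abs, abs_of_nonneg (by positivity), this]
  exact mul_le_mul_of_nonneg_right key (Real.exp_pos _).le


lemma base_case {p : ℕ} (x : EuclideanSpace ℝ (Fin p)) {r : ℝ} (hr : 0 < r) :
    ∫ t : EuclideanSpace ℝ (Fin p), Real.cos ⟪t, x⟫ * Real.exp (-r * ‖t‖ ^ 2) =
      π ^ ((p : ℝ) / 2) * r ^ (-(p : ℝ) / 2) * Real.exp (-(‖x‖ ^ 2 / 4) / r) := by
  have hbr : (0:ℝ) < ((r : ℂ)).re := by simpa using hr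
  have h := GaussianFourier.integral_cexp_neg_mul_sq_norm_add
    (V := EuclideanSpace ℝ (Fin p)) hbr Complex.I x
  have hint := GaussianFourier.integrable_cexp_neg_mul_sq_norm_add
    (V := EuclideanSpace ℝ (Fin p)) hbr Complex.I x
  have hre : (∫ v : EuclideanSpace ℝ (Fin p),
      Complex.exp (-(r:ℂ) * ‖v‖ ^ 2 + Complex.I * ⟪x, v⟫)).re
      = ∫ v : EuclideanSpace ℝ (Fin p), Real.cos ⟪v, x⟫ * Real.exp (-r * ‖v‖ ^ 2) := by
    rw [← RCLike.re_to_complex, ← integral_re hint]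
    congr 1 with v
    rw [RCLike.re_to_complex, Complex.exp_re]
    have h1 : (-(r:ℂ) * ‖v‖ ^ 2 + Complex.I * ⟪x, v⟫).re = -r * ‖v‖ ^ 2 := by simp [← Complex.ofReal_pow]
    have h2 : (-(r:ℂ) * ‖v‖ ^ 2 + Complex.I * ⟪x, v⟫).im = ⟪x, v⟫ := by simp [← Complex.ofReal_pow]
    rw [h1, h2, real_inner_comm]
    ring
  rw [← hre, h]
  have hfr : (Module.finrank ℝ (EuclideanSpace ℝ (Fin p)) : ℂ) = (p : ℂ) := by
    simp
  rw [hfr]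
  have hI : Complex.I ^ 2 * (‖x‖:ℂ) ^ 2 / (4 * (r:ℂ)) = ((-(‖x‖^2/4)/r : ℝ) : ℂ) := by
    rw [Complex.I_sq]
    push_cast
    field_simp
  rw [hI, ← Complex.ofReal_exp]
  have hpow : ((π : ℂ) / (r : ℂ)) ^ ((p : ℂ) / 2) = (((π / r) ^ ((p:ℝ)/2) : ℝ) : ℂ) := by
    rw [← Complex.ofReal_div, Complex.ofReal_cpow (by positivity)]
    norm_num
  rw [hpow, ← Complex.ofReal_mul, Complex.ofReal_re, Real.div_rpow pi_pos.le hr.le,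
    show (-(p:ℝ)/2) = -((p:ℝ)/2) from by ring, Real.rpow_neg hr.le, div_eq_mul_inv]



lemma J_hasDeriv {p : ℕ} (x : EuclideanSpace ℝ (Fin p)) (ν : ℕ) {r : ℝ} (hr : 0 < r) :
    HasDerivAt (fun b => ∫ t : EuclideanSpace ℝ (Fin p),
        Real.cos ⟪t, x⟫ * (‖t‖ ^ 2) ^ ν * Real.exp (-b * ‖t‖ ^ 2))
      (-(∫ t : EuclideanSpace ℝ (Fin p),
        Real.cos ⟪t, x⟫ * (‖t‖ ^ 2) ^ (ν + 1) * Real.exp (-r * ‖t‖ ^ 2))) r := by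
  have hcont : Continuous fun t : EuclideanSpace ℝ (Fin p) => Real.cos ⟪t, x⟫ :=
    Real.continuous_cos.comp (continuous_id.inner continuous_const)
  have hbnd : ∀ (n : ℕ) (b : ℝ), 0 < b → Integrable
      (fun t : EuclideanSpace ℝ (Fin p) => Real.cos ⟪t, x⟫ * (‖t‖ ^ 2) ^ n * Real.exp (-b * ‖t‖ ^ 2)) := by
    intro n b hb
    refine (integrable_aux (2 * n) hb).mono'
      (Continuous.aestronglyMeasurable (by fun_prop)) ?_
    filter_upwards with t
    rw [Real.norm_eq_abs, abs_mul, abs_mul, abs_exp]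
    have h1 : |Real.cos ⟪t, x⟫| ≤ 1 := Real.abs_cos_le_one _
    have h2 : |(‖t‖ ^ 2) ^ n| = ‖t‖ ^ (2 * n) := by
      rw [abs_of_nonneg (by positivity), ← pow_mul, mul_comm]
    rw [h2]
    calc |Real.cos ⟪t, x⟫| * ‖t‖ ^ (2 * n) * Real.exp (-b * ‖t‖ ^ 2)
        ≤ 1 * ‖t‖ ^ (2 * n) * Real.exp (-b * ‖t‖ ^ 2) := by
          apply mul_le_mul_of_nonneg_right _ (Real.exp_pos _).le
          exact mul_le_mul_of_nonneg_right h1 (by positivity)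
      _ = ‖t‖ ^ (2 * n) * Real.exp (-b * ‖t‖ ^ 2) := by ring
  have key := hasDerivAt_integral_of_dominated_loc_of_deriv_le (μ := (volume : Measure (EuclideanSpace ℝ (Fin p))))
    (F := fun b t => Real.cos ⟪t, x⟫ * (‖t‖ ^ 2) ^ ν * Real.exp (-b * ‖t‖ ^ 2))
    (F' := fun b t => -(Real.cos ⟪t, x⟫ * (‖t‖ ^ 2) ^ (ν + 1) * Real.exp (-b * ‖t‖ ^ 2)))
    (x₀ := r) (bound := fun t => ‖t‖ ^ (2 * (ν + 1)) * Real.exp (-(r/2) * ‖t‖ ^ 2))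
    (ball_mem_nhds r (half_pos hr)) ?_ ?_ ?_ ?_ ?_ ?_
  · have := key.2
    rwa [integral_neg] at this
  · filter_upwards with b
    exact Continuous.aestronglyMeasurable (by fun_prop)
  · exact hbnd ν r hr
  · exact Continuous.aestronglyMeasurable (by fun_prop)
  · filter_upwards with t b hb
    rw [mem_ball, Real.dist_eq, abs_sub_lt_iff] at hb
    have hb2 : r / 2 < b := by linarith
    rw [norm_neg, Real.norm_eq_abs, abs_mul, abs_mul, abs_exp]
    have h1 : |Real.cos ⟪t, x⟫| ≤ 1 := Real.abs_cos_le_one _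
    have h2 : |(‖t‖ ^ 2) ^ (ν+1)| = ‖t‖ ^ (2 * (ν+1)) := by
      rw [abs_of_nonneg (by positivity), ← pow_mul, mul_comm]
    have h3 : Real.exp (-b * ‖t‖ ^ 2) ≤ Real.exp (-(r/2) * ‖t‖ ^ 2) := by
      apply Real.exp_le_exp.mpr
      nlinarith [sq_nonneg ‖t‖]
    rw [h2]
    calc |Real.cos ⟪t, x⟫| * ‖t‖ ^ (2 * (ν+1)) * Real.exp (-b * ‖t‖ ^ 2)
        ≤ 1 * ‖t‖ ^ (2 * (ν+1)) * Real.exp (-b * ‖t‖ ^ 2) := by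
          apply mul_le_mul_of_nonneg_right _ (Real.exp_pos _).le
          exact mul_le_mul_of_nonneg_right h1 (by positivity)
      _ = ‖t‖ ^ (2 * (ν+1)) * Real.exp (-b * ‖t‖ ^ 2) := by ring
      _ ≤ ‖t‖ ^ (2 * (ν+1)) * Real.exp (-(r/2) * ‖t‖ ^ 2) :=
          mul_le_mul_of_nonneg_left h3 (by positivity)
  · exact integrable_aux (2 * (ν + 1)) (half_pos hr)
  · filter_upwards with t b _
    have hd : HasDerivAt (fun b : ℝ => Real.exp (-b * ‖t‖ ^ 2))
        (-‖t‖ ^ 2 * Real.exp (-b * ‖t‖ ^ 2)) b := by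
      have : HasDerivAt (fun b : ℝ => -b * ‖t‖ ^ 2) (-‖t‖ ^ 2) b := by
        simpa using (hasDerivAt_id b).neg.mul_const (‖t‖ ^ 2)
      simpa [mul_comm] using this.exp
    have hmul := hd.const_mul (Real.cos ⟪t, x⟫ * (‖t‖ ^ 2) ^ ν)
    refine hmul.congr_deriv ?_
    ring

-- derivative of the elementary building block
lemma block_hasDeriv (c β : ℝ) {r : ℝ} (hr : 0 < r) :
    HasDerivAt (fun s : ℝ => Real.exp (-c / s) * s ^ β)
      (Real.exp (-c / r) * (c * r ^ (β - 2) + β * r ^ (β - 1))) r := by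
  have h1 : HasDerivAt (fun s : ℝ => -c / s) (c * (r ^ (2:ℕ))⁻¹) r := by
    simpa [div_eq_mul_inv, neg_mul_neg] using (hasDerivAt_inv hr.ne').const_mul (-c)
  have h2 := h1.exp
  have h3 : HasDerivAt (fun s : ℝ => s ^ β) (β * r ^ (β - 1)) r :=
    Real.hasDerivAt_rpow_const (Or.inl hr.ne')
  have h4 := h2.fun_mul h3
  refine h4.congr_deriv ?_
  have e0 : (r ^ (2:ℕ))⁻¹ = r ^ (-2:ℝ) := by
    rw [← Real.rpow_natCast r 2, ← Real.rpow_neg hr.le]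
    norm_num
  have e1 : r ^ (β - 2) = r ^ β * (r ^ (2:ℕ))⁻¹ := by
    rw [e0, ← Real.rpow_add hr]
    norm_num [sub_eq_add_neg]
  rw [e1]
  ring

lemma abstract_coeff (Γν Γk A B X c q kk νν : ℝ) (h : B*(kk+1) = A*(νν - kk))
    (hD : (kk+q) ≠ 0) (hΓ : Γk ≠ 0) :
    Γν * (A * X / Γk) * c + Γν * (B * (X*(-c)) / ((kk+q)*Γk)) * (-νν - q - (kk+1))
      = -((νν+q)*Γν * ((A+B) * (X*(-c)) / ((kk+q)*Γk))) := by
  field_simp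
  ring_nf
  linear_combination (Γν * X * c) * h



lemma G_hasDeriv {p : ℕ} (hp : 1 ≤ p) (ν : ℕ) (c : ℝ) {r : ℝ} (hr : 0 < r) :
    HasDerivAt (Gfun p ν c) (-(Gfun p (ν + 1) c r)) r := by
  have hp1 : (1:ℝ) ≤ p := by exact_mod_cast hp
  have hq : ∀ k : ℕ, (0:ℝ) < (k:ℝ) + (p:ℝ)/2 := fun k => by
    have := Nat.cast_nonneg (α := ℝ) k; linarith
  have hΓpos : ∀ k : ℕ, 0 < Real.Gamma ((k:ℝ) + (p:ℝ)/2) :=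
    fun k => Real.Gamma_pos_of_pos (hq k)
  have hΓstep : ∀ k : ℕ, Real.Gamma (((k+1:ℕ):ℝ) + (p:ℝ)/2)
      = ((k:ℝ) + (p:ℝ)/2) * Real.Gamma ((k:ℝ) + (p:ℝ)/2) := fun k => by
    rw [show ((k+1:ℕ):ℝ) + (p:ℝ)/2 = ((k:ℝ) + (p:ℝ)/2) + 1 by push_cast; ring,
      Real.Gamma_add_one (hq k).ne']
  -- the summand functions and their derivatives
  set K : ℝ := π ^ ((p:ℝ)/2) with hK
  set Γν : ℝ := Real.Gamma ((ν:ℝ) + (p:ℝ)/2) with hΓν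
  have hterm : ∀ k ∈ Finset.range (ν+1), HasDerivAt
      (fun s : ℝ => K * Γν * ((ν.choose k : ℝ) * (-c)^k / Real.Gamma ((k:ℝ) + (p:ℝ)/2))
        * (Real.exp (-c/s) * s ^ (-(ν:ℝ) - (p:ℝ)/2 - k)))
      (K * Γν * ((ν.choose k : ℝ) * (-c)^k / Real.Gamma ((k:ℝ) + (p:ℝ)/2))
        * (Real.exp (-c/r) * (c * r ^ (-(ν:ℝ) - (p:ℝ)/2 - k - 2)
            + (-(ν:ℝ) - (p:ℝ)/2 - k) * r ^ (-(ν:ℝ) - (p:ℝ)/2 - k - 1)))) r := by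
    intro k _
    exact (block_hasDeriv c _ hr).const_mul _
  have hsum := HasDerivAt.fun_sum hterm
  have hGeq : Gfun p ν c = fun s : ℝ => ∑ k ∈ Finset.range (ν+1),
      K * Γν * ((ν.choose k : ℝ) * (-c)^k / Real.Gamma ((k:ℝ) + (p:ℝ)/2))
        * (Real.exp (-c/s) * s ^ (-(ν:ℝ) - (p:ℝ)/2 - k)) := by
    funext s
    rw [Gfun, Finset.mul_sum]
    exact Finset.sum_congr rfl fun k _ => by ring
  rw [hGeq]
  refine hsum.congr_deriv ?_
  symm
  -- now the algebraic identity for the derivative value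
  -- abbreviate t j := r ^ (-(ν:ℝ) - 1 - p/2 - j)
  have ht2 : ∀ k : ℕ, r ^ (-(ν:ℝ) - (p:ℝ)/2 - k - 2) = r ^ (-(ν:ℝ) - 1 - (p:ℝ)/2 - ((k:ℝ)+1)) := by
    intro k; congr 1; ring
  have ht1 : ∀ k : ℕ, r ^ (-(ν:ℝ) - (p:ℝ)/2 - k - 1) = r ^ (-(ν:ℝ) - 1 - (p:ℝ)/2 - (k:ℝ)) := by
    intro k; congr 1; ring
  -- rewrite LHS : -(Gfun p (ν+1) c r)
  have hL : -(Gfun p (ν+1) c r) = ∑ j ∈ Finset.range (ν+2),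
      -(K * Real.Gamma (((ν+1:ℕ):ℝ) + (p:ℝ)/2) * Real.exp (-c/r) *
        (((ν+1).choose j : ℝ) * (-c)^j / Real.Gamma ((j:ℝ) + (p:ℝ)/2)
          * r ^ (-(ν:ℝ) - 1 - (p:ℝ)/2 - j))) := by
    rw [Gfun, Finset.mul_sum, ← Finset.sum_neg_distrib]
    apply Finset.sum_congr rfl fun j _ => ?_
    have : r ^ (-((ν+1:ℕ):ℝ) - (p:ℝ)/2 - (j:ℝ)) = r ^ (-(ν:ℝ) - 1 - (p:ℝ)/2 - (j:ℝ)) := by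
      congr 1; push_cast; ring
    rw [this]
  rw [hL]
  -- rewrite RHS : split into the two parts
  have hR : ∀ k : ℕ, K * Γν * ((ν.choose k : ℝ) * (-c)^k / Real.Gamma ((k:ℝ) + (p:ℝ)/2))
        * (Real.exp (-c/r) * (c * r ^ (-(ν:ℝ) - (p:ℝ)/2 - k - 2)
            + (-(ν:ℝ) - (p:ℝ)/2 - k) * r ^ (-(ν:ℝ) - (p:ℝ)/2 - k - 1)))
      = K * Real.exp (-c/r) * (Γν * ((ν.choose k : ℝ) * (-c)^k / Real.Gamma ((k:ℝ) + (p:ℝ)/2)) * c)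
          * r ^ (-(ν:ℝ) - 1 - (p:ℝ)/2 - ((k:ℝ)+1))
        + K * Real.exp (-c/r) * (Γν * ((ν.choose k : ℝ) * (-c)^k / Real.Gamma ((k:ℝ) + (p:ℝ)/2))
            * (-(ν:ℝ) - (p:ℝ)/2 - k)) * r ^ (-(ν:ℝ) - 1 - (p:ℝ)/2 - (k:ℝ)) := by
    intro k
    rw [← ht2 k, ← ht1 k]
    ring
  have hchoose : ∀ k : ℕ, k ≤ ν →
      ((ν.choose (k+1) : ℝ)) * ((k:ℝ)+1) = (ν.choose k : ℝ) * ((ν:ℝ) - (k:ℝ)) := by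
    intro k hk
    have h0 := Nat.choose_succ_right_eq ν k
    have h2 : ((ν.choose (k+1) * (k+1) : ℕ) : ℝ) = ((ν.choose k * (ν - k) : ℕ) : ℝ) := by
      exact_mod_cast congrArg (Nat.cast : ℕ → ℝ) h0
    push_cast [Nat.cast_sub hk] at h2
    linarith
  simp_rw [hR]
  rw [Finset.sum_add_distrib]
  have hS2 : ∑ k ∈ Finset.range (ν+1),
        (K * Real.exp (-c/r) * (Γν * ((ν.choose k : ℝ) * (-c)^k / Real.Gamma ((k:ℝ) + (p:ℝ)/2))
          * (-(ν:ℝ) - (p:ℝ)/2 - k)) * r ^ (-(ν:ℝ) - 1 - (p:ℝ)/2 - (k:ℝ)))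
      = ∑ k ∈ Finset.range (ν+2),
        (K * Real.exp (-c/r) * (Γν * ((ν.choose k : ℝ) * (-c)^k / Real.Gamma ((k:ℝ) + (p:ℝ)/2))
          * (-(ν:ℝ) - (p:ℝ)/2 - k)) * r ^ (-(ν:ℝ) - 1 - (p:ℝ)/2 - (k:ℝ))) := by
    rw [Finset.sum_range_succ (n := ν+1), Nat.choose_succ_self]
    simp
  rw [hS2, Finset.sum_range_succ' _ (ν+1), Finset.sum_range_succ' _ (ν+1)]
  conv_rhs => rw [← add_assoc, ← Finset.sum_add_distrib]
  congr 1
  · apply Finset.sum_congr rfl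
    intro i hi
    have hi' : i ≤ ν := by
      have := Finset.mem_range.mp hi; omega
    have habs := abstract_coeff Γν (Real.Gamma ((i:ℝ) + (p:ℝ)/2)) (ν.choose i : ℝ)
      (ν.choose (i+1) : ℝ) ((-c)^i) c ((p:ℝ)/2) (i:ℝ) (ν:ℝ)
      (hchoose i hi') (hq i).ne' (hΓpos i).ne'
    have h1 : -(K * Real.Gamma (((ν+1:ℕ):ℝ) + (p:ℝ)/2) * Real.exp (-c/r) *
          (((ν+1).choose (i+1) : ℝ) * (-c)^(i+1) / Real.Gamma (((i+1:ℕ):ℝ) + (p:ℝ)/2)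
            * r ^ (-(ν:ℝ) - 1 - (p:ℝ)/2 - ((i+1:ℕ):ℝ))))
        = K * Real.exp (-c/r) * r ^ (-(ν:ℝ) - 1 - (p:ℝ)/2 - ((i:ℝ)+1)) *
          (-(((ν:ℝ)+(p:ℝ)/2)*Γν * (((ν.choose i : ℝ)+(ν.choose (i+1) : ℝ))
            * ((-c)^i*(-c)) / (((i:ℝ)+(p:ℝ)/2)*Real.Gamma ((i:ℝ) + (p:ℝ)/2))))) := by
      rw [hΓstep ν, hΓstep i, Nat.choose_succ_succ]
      have he : r ^ (-(ν:ℝ) - 1 - (p:ℝ)/2 - ((i+1:ℕ):ℝ))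
          = r ^ (-(ν:ℝ) - 1 - (p:ℝ)/2 - ((i:ℝ)+1)) := by
        congr 1; push_cast; ring
      rw [he]
      push_cast
      ring
    have h2 : K * Real.exp (-c/r) * (Γν * ((ν.choose i : ℝ) * (-c)^i
            / Real.Gamma ((i:ℝ) + (p:ℝ)/2)) * c) * r ^ (-(ν:ℝ) - 1 - (p:ℝ)/2 - ((i:ℝ)+1))
          + K * Real.exp (-c/r) * (Γν * ((ν.choose (i+1) : ℝ) * (-c)^(i+1)
            / Real.Gamma (((i+1:ℕ):ℝ) + (p:ℝ)/2)) * (-(ν:ℝ) - (p:ℝ)/2 - ((i+1:ℕ):ℝ)))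
            * r ^ (-(ν:ℝ) - 1 - (p:ℝ)/2 - ((i+1:ℕ):ℝ))
        = K * Real.exp (-c/r) * r ^ (-(ν:ℝ) - 1 - (p:ℝ)/2 - ((i:ℝ)+1)) *
          (Γν * ((ν.choose i : ℝ) * ((-c)^i) / Real.Gamma ((i:ℝ) + (p:ℝ)/2)) * c
            + Γν * ((ν.choose (i+1) : ℝ) * ((-c)^i*(-c))
              / (((i:ℝ)+(p:ℝ)/2)*Real.Gamma ((i:ℝ) + (p:ℝ)/2)))
              * (-(ν:ℝ) - (p:ℝ)/2 - ((i:ℝ)+1))) := by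
      rw [hΓstep i]
      have he : r ^ (-(ν:ℝ) - 1 - (p:ℝ)/2 - ((i+1:ℕ):ℝ))
          = r ^ (-(ν:ℝ) - 1 - (p:ℝ)/2 - ((i:ℝ)+1)) := by
        congr 1; push_cast; ring
      rw [he]
      push_cast
      ring
    rw [h1, h2, habs]
  · rw [hΓstep ν, ← hΓν]
    simp only [Nat.choose_zero_right, Nat.cast_one, Nat.cast_zero, pow_zero]
    ring

lemma key_ind {p : ℕ} (hp : 1 ≤ p) (x : EuclideanSpace ℝ (Fin p)) (ν : ℕ) :
    ∀ r : ℝ, 0 < r →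
      (∫ t : EuclideanSpace ℝ (Fin p),
        Real.cos ⟪t, x⟫ * (‖t‖ ^ 2) ^ ν * Real.exp (-r * ‖t‖ ^ 2)) =
      Gfun p ν (‖x‖ ^ 2 / 4) r := by
  induction ν with
  | zero =>
    intro r hr
    have h0 : (∫ t : EuclideanSpace ℝ (Fin p),
        Real.cos ⟪t, x⟫ * (‖t‖ ^ 2) ^ 0 * Real.exp (-r * ‖t‖ ^ 2))
        = ∫ t : EuclideanSpace ℝ (Fin p), Real.cos ⟪t, x⟫ * Real.exp (-r * ‖t‖ ^ 2) := by
      congr 1 with t; ring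
    rw [h0, base_case x hr, Gfun,
      show (-(p:ℝ)/2) = (-((0:ℕ):ℝ) - (p:ℝ)/2 - ((0:ℕ):ℝ)) from by push_cast; ring]
    have hΓ : Real.Gamma (((0:ℕ):ℝ) + (p:ℝ)/2) ≠ 0 := by
      apply (Real.Gamma_pos_of_pos ?_).ne'
      have : (1:ℝ) ≤ p := by exact_mod_cast hp
      norm_num; linarith
    rw [Finset.sum_range_one]
    field_simp
    ring
    simp
  | succ ν ih =>
    intro r hr
    have hJd := J_hasDeriv x ν hr
    have hGd := G_hasDeriv hp ν (‖x‖ ^ 2 / 4) hr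
    have heq : (fun b : ℝ => ∫ t : EuclideanSpace ℝ (Fin p),
        Real.cos ⟪t, x⟫ * (‖t‖ ^ 2) ^ ν * Real.exp (-b * ‖t‖ ^ 2))
          =ᶠ[nhds r] Gfun p ν (‖x‖ ^ 2 / 4) := by
      filter_upwards [Ioi_mem_nhds hr] with b hb
      exact ih b hb
    have hGd' : HasDerivAt (fun b : ℝ => ∫ t : EuclideanSpace ℝ (Fin p),
        Real.cos ⟪t, x⟫ * (‖t‖ ^ 2) ^ ν * Real.exp (-b * ‖t‖ ^ 2))
        (-(Gfun p (ν+1) (‖x‖ ^ 2 / 4) r)) r := hGd.congr_of_eventuallyEq heq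
    have := hJd.unique hGd'
    exact (neg_inj.mp this.symm).symm

/-- Closed form of `I_{ν,r}(x;1) = ∫ cos(tᵀx)(‖t‖²)^ν exp(-r ‖t‖²) dt` for a nonnegative
integer `ν` and `r > 0`. -/
theorem kotz_integral_s_eq_one
    (p : ℕ) (hp : 1 ≤ p) (ν : ℕ) (r : ℝ) (hr : 0 < r)
    (x : EuclideanSpace ℝ (Fin p)) :
    ∫ t : EuclideanSpace ℝ (Fin p),
        Real.cos ⟪t, x⟫ * (‖t‖ ^ 2) ^ ν * Real.exp (-r * ‖t‖ ^ 2) =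
      π ^ ((p : ℝ) / 2) * Real.Gamma ((2 * ν + p) / 2) / r ^ ((2 * (ν : ℝ) + p) / 2) *
        Real.exp (-(‖x‖ ^ 2) / (4 * r)) *
        ∑ k ∈ Finset.range (ν + 1), (ν.choose k : ℝ) *
          ((-(‖x‖ ^ 2 / (4 * r))) ^ k / Real.Gamma (((p : ℝ) + 2 * k) / 2)) := by
  rw [key_ind hp x ν r hr, Gfun]
  set c : ℝ := ‖x‖ ^ 2 / 4 with hc
  have hΓeq : Real.Gamma ((2 * (ν:ℝ) + p) / 2) = Real.Gamma ((ν:ℝ) + (p:ℝ)/2) := by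
    congr 1; ring
  have hexp : Real.exp (-(‖x‖ ^ 2) / (4 * r)) = Real.exp (-c / r) := by
    congr 1; rw [hc]; ring
  rw [hΓeq, hexp, Finset.mul_sum, Finset.mul_sum]
  apply Finset.sum_congr rfl
  intro k _
  have hΓk : Real.Gamma (((p:ℝ) + 2 * k) / 2) = Real.Gamma ((k:ℝ) + (p:ℝ)/2) := by
    congr 1; ring
  have hpowk : (-(‖x‖ ^ 2 / (4 * r))) ^ k = (-c) ^ k / r ^ k := by
    rw [hc, show -(‖x‖^2/(4*r)) = -(‖x‖^2/4)/r from by ring, div_pow]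
  have hrpow : r ^ (-(ν:ℝ) - (p:ℝ)/2 - (k:ℝ))
      = (r ^ ((2 * (ν:ℝ) + p) / 2) * r ^ k)⁻¹ := by
    rw [← Real.rpow_natCast r k, ← Real.rpow_add hr, ← Real.rpow_neg hr.le]
    congr 1; ring
  rw [hΓk, hpowk, hrpow, mul_inv]
  ring
end
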